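/- arXiv:2505.06374 — 3 statements merged into one kernel-verified Lean document; each statement's English description precedes it below -/
import Mathlib

section
/- Suppose $\gamma_1, \gamma_2 > 0$ with $\gamma_2 > 3\gamma_1$, and suppose $u > 0$ satisfies $\gamma_1 u \le \gamma_2 \log(u)$. Then $u \le \frac{\gamma_2}{\gamma_1}\left[\log\left(\frac{\gamma_2}{\gamma_1}\right) + \sqrt{2\left(\log\left(\frac{\gamma_2}{\gamma_1}\right) - 1\right)}\right]$. -/
/-!
Put `r = γ₂ / γ₁`, `L = log r` and `s = √(2 (L - 1))`, so that `L + s = 1 + s + s² / 2 ≤ exp s`.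
Taking logarithms, `B = r (L + s)` satisfies `r log B = r (L + log (L + s)) ≤ B`. Since
`x ↦ x - r log x` is increasing for `x > r` (by concavity of `log`) and `B > r`, every `u` with
`u ≤ r log u` lies below `B`.
-/

open Real

namespace Real

lemma add_sqrt_two_mul_sub_one_le_exp {L : ℝ} (hL : 1 ≤ L) :
    L + √(2 * (L - 1)) ≤ exp √(2 * (L - 1)) := by
  have hsq : √(2 * (L - 1)) ^ 2 = 2 * (L - 1) := sq_sqrt (by linarith)
  have := quadratic_le_exp_of_nonneg (sqrt_nonneg (2 * (L - 1)))
  linarith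

lemma le_of_le_mul_log {r B u : ℝ} (hr : 0 ≤ r) (hrB : r < B) (hB : r * log B ≤ B)
    (hu : 0 < u) (hur : u ≤ r * log u) : u ≤ B := by
  by_contra! hBu
  have hB0 : 0 < B := hr.trans_lt hrB
  have tangent : log u ≤ log B + (u - B) / B := by
    have := log_le_sub_one_of_pos (div_pos hu hB0)
    rw [log_div hu.ne' hB0.ne', div_sub_one hB0.ne'] at this
    linarith
  have slope : r * ((u - B) / B) < u - B := by
    rw [mul_div_assoc', div_lt_iff₀ hB0]
    nlinarith
  nlinarith

theorem le_mul_log_add_sqrt_of_le_mul_log {r u : ℝ} (hr : exp 1 < r) (hu : 0 < u)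
    (hur : u ≤ r * log u) : u ≤ r * (log r + √(2 * (log r - 1))) := by
  have hr0 : 0 < r := (exp_pos 1).trans hr
  have hL : 1 < log r := (lt_log_iff_exp_lt hr0).mpr hr
  have hLs : 1 < log r + √(2 * (log r - 1)) := by linarith [sqrt_nonneg (2 * (log r - 1))]
  refine le_of_le_mul_log hr0.le (lt_mul_of_one_lt_right hr0 hLs) ?_ hu hur
  have hlog : log (log r + √(2 * (log r - 1))) ≤ √(2 * (log r - 1)) :=
    (log_le_iff_le_exp (by linarith)).mpr (add_sqrt_two_mul_sub_one_le_exp hL.le)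
  rw [log_mul hr0.ne' (by linarith)]
  gcongr

end Real

theorem stmt_1 (γ₁ γ₂ u : ℝ) (hγ₁ : 0 < γ₁) (hγ₂ : γ₂ > 3 * γ₁)
    (hu : 0 < u) (h : γ₁ * u ≤ γ₂ * Real.log u) :
    u ≤ (γ₂ / γ₁) * (Real.log (γ₂ / γ₁) + Real.sqrt (2 * (Real.log (γ₂ / γ₁) - 1))) := by
  have hr : exp 1 < γ₂ / γ₁ :=
    exp_one_lt_d9.trans (by rw [lt_div_iff₀ hγ₁]; linarith)
  refine le_mul_log_add_sqrt_of_le_mul_log hr hu ?_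
  rw [div_mul_eq_mul_div, le_div_iff₀ hγ₁]
  linarith
end

section
/- Define, for $k \ge 1$: $x_k = \frac{1}{k+1}$, $p_k = \frac{1}{k+1} + \frac{1}{(k+1)^2}$ (note $p_k \in (0,1)$ for $k \ge 1$), and let $g_k$ be a random variable taking value $1$ with probability $p_k$ and $0$ with probability $1 - p_k$. Let $P(y) = \max(0, y)$ denote projection onto $[0, \infty)$. Define $\Xi_k = |P(x_k - p_k) - x_k|$ and $D_k = \mathbb{E}[\,|P(x_k - g_k) - x_k|\,]$. Then $\Xi_k = \frac{1}{k+1}$, $D_k = \frac{1}{(k+1)^2} + \frac{1}{(k+1)^3}$, and consequently $\lim_{k \to \infty} D_k / \Xi_k = 0$. -/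
open Filter Set

/-! Since `x_k ≤ p_k`, the projected step `P(x_k - p_k)` is `0` and `Ξ_k = x_k`. Of the two outcomes
of `g_k`, only `g_k = 1` moves the iterate, so `D_k = p_k x_k`, and the ratio `D_k / Ξ_k = p_k`
tends to `0`. -/

lemma abs_max_zero_sub_sub_self {x g : ℝ} (hx : 0 ≤ x) (hg : x ≤ g) :
    |max 0 (x - g) - x| = x := by
  rw [max_eq_left (by linarith), zero_sub, abs_neg, abs_of_nonneg hx]

lemma two_point_projection_error {x p : ℝ} (hx₀ : 0 ≤ x) (hx₁ : x ≤ 1) :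
    p * |max 0 (x - 1) - x| + (1 - p) * |max 0 (x - 0) - x| = p * x := by
  rw [abs_max_zero_sub_sub_self hx₀ hx₁, sub_zero, max_eq_right hx₀, sub_self, abs_zero,
    mul_zero, add_zero]

lemma add_sq_mem_Ioo {t : ℝ} (h₀ : 0 < t) (h₁ : t ≤ 1 / 2) : t + t ^ 2 ∈ Ioo (0 : ℝ) 1 :=
  ⟨by positivity, by nlinarith⟩

lemma one_div_succ_le_half {k : ℕ} (hk : 1 ≤ k) : 1 / ((k : ℝ) + 1) ≤ 1 / 2 := by
  have : (1 : ℝ) ≤ k := by exact_mod_cast hk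
  gcongr
  linarith

lemma tendsto_one_div_add_one_div_sq_atTop_nhds_zero_nat :
    Tendsto (fun k : ℕ => 1 / ((k : ℝ) + 1) + 1 / ((k : ℝ) + 1) ^ 2) atTop (nhds 0) := by
  have h : Tendsto (fun k : ℕ => 1 / ((k : ℝ) + 1)) atTop (nhds 0) :=
    tendsto_one_div_add_atTop_nhds_zero_nat
  simpa only [one_div_pow, add_zero, zero_pow two_ne_zero] using h.add (h.pow 2)

/-- the counterexample. `g_k` takes value `1` with probability `p k`
and `0` with probability `1 - p k`; `D k` is the resulting expectation of
`|P(x_k - g_k) - x_k|` with `P` the projection onto `[0,∞)`. -/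
theorem stmt_12 (x p Ξ D : ℕ → ℝ)
    (hx : ∀ k, x k = 1 / ((k : ℝ) + 1))
    (hp : ∀ k, p k = 1 / ((k : ℝ) + 1) + 1 / ((k : ℝ) + 1) ^ 2)
    (hΞ : ∀ k, Ξ k = |max 0 (x k - p k) - x k|)
    (hD : ∀ k, D k = p k * |max 0 (x k - 1) - x k| + (1 - p k) * |max 0 (x k - 0) - x k|) :
    (∀ k ≥ 1, p k ∈ Set.Ioo (0 : ℝ) 1) ∧
    (∀ k ≥ 1, Ξ k = 1 / ((k : ℝ) + 1)) ∧
    (∀ k ≥ 1, D k = 1 / ((k : ℝ) + 1) ^ 2 + 1 / ((k : ℝ) + 1) ^ 3) ∧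
    Tendsto (fun k => D k / Ξ k) atTop (nhds 0) := by
  have hx₀ (k : ℕ) : 0 < x k := by rw [hx]; positivity
  have hx₁ (k : ℕ) : x k ≤ 1 := by rw [hx]; exact div_le_one_of_le₀ (by simp) (by positivity)
  have hp_eq (k : ℕ) : p k = x k + x k ^ 2 := by rw [hp, hx, one_div_pow]
  have hΞ_eq (k : ℕ) : Ξ k = x k :=
    (hΞ k).trans (abs_max_zero_sub_sub_self (hx₀ k).le (by nlinarith [hp_eq k]))
  have hD_eq (k : ℕ) : D k = p k * x k :=
    (hD k).trans (two_point_projection_error (hx₀ k).le (hx₁ k))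
  refine ⟨fun k hk => ?_, fun k _ => (hΞ_eq k).trans (hx k), fun k _ => ?_, ?_⟩
  · rw [hp_eq]
    exact add_sq_mem_Ioo (hx₀ k) ((hx k).trans_le (one_div_succ_le_half hk))
  · rw [hD_eq, hp, hx]
    field_simp
  · have hratio (k : ℕ) : D k / Ξ k = p k := by
      rw [hD_eq, hΞ_eq, mul_div_cancel_right₀ _ (hx₀ k).ne']
    simpa only [hratio, hp] using tendsto_one_div_add_one_div_sq_atTop_nhds_zero_nat
end

section
/- Let $\mathcal{F} = \prod_{i=1}^n [l_i, u_i]$ be a box, $x \in \mathcal{F}$, $g \in \mathbb{R}^n$, $d = P_{\mathcal{F}}(x - g) - x$, and for each $i$ let $\Delta_i \ge 0$ with $\Delta_i \le |d_i|$. Define $\mathcal{B} = \{ y \in \mathbb{R}^n : |y_i - x_i| \le \Delta_i \text{ for all } i \}$ and $s^L = P_{\mathcal{F} \cap \mathcal{B}}(x - g) - x$. Then for each $i$, $s^L_i$ has the same sign as $d_i$ (or is zero), and $|s^L_i| = \min(|d_i|, \Delta_i)$; in particular $g_i s^L_i \le 0$ for all $i$. -/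
/-!
Coordinatewise, the sign of `g i` decides everything. If `g i ≥ 0` the projected step is
`d i = -min (g i) (x i - l i)`, and `Δ i ≤ |d i|` says that `x i - Δ i` lies between `x i - g i`
and `l i`, so the clipping to `[x i - Δ i, x i + Δ i]` is active from below and `sL i = -Δ i`.
The case `g i ≤ 0` is the mirror image, with `sL i = Δ i`.
-/

section ClippedStep

/-- One coordinate of `d = P_𝓕(x - g) - x`, the step to the projection onto `[l, u]`. -/
def projStep (l u x g : ℝ) : ℝ := max l (min (x - g) u) - x

/-- One coordinate of `sL = P_{𝓕 ∩ 𝓑}(x - g) - x`, projecting also onto `[x - Δ, x + Δ]`. -/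
def clippedStep (l u x g Δ : ℝ) : ℝ := max l (max (x - Δ) (min (x - g) (min (x + Δ) u))) - x

variable {l u x g Δ : ℝ}

theorem projStep_eq_neg_min (hxu : x ≤ u) (hg : 0 ≤ g) :
    projStep l u x g = -min g (x - l) := by
  rw [projStep, min_eq_left (by linarith), ← neg_sub x, ← min_sub_sub_left, sub_sub_cancel,
    min_comm]

theorem projStep_eq_min (hxl : l ≤ x) (hxu : x ≤ u) (hg : g ≤ 0) :
    projStep l u x g = min (-g) (u - x) := by
  rw [projStep, max_eq_right (le_min (by linarith) (by linarith)), ← min_sub_sub_right,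
    sub_sub_cancel_left]

theorem clippedStep_eq_neg (hxu : x ≤ u) (hg : 0 ≤ g) (hΔ₀ : 0 ≤ Δ) (hΔ : Δ ≤ min g (x - l)) :
    clippedStep l u x g Δ = -Δ := by
  have hΔg := hΔ.trans (min_le_left _ _)
  have hΔl := hΔ.trans (min_le_right _ _)
  rw [clippedStep, min_eq_left (le_min (by linarith) (by linarith)),
    max_eq_left (show x - g ≤ x - Δ by linarith), max_eq_right (show l ≤ x - Δ by linarith)]
  ring

theorem clippedStep_eq (hxl : l ≤ x) (hΔ₀ : 0 ≤ Δ) (hΔ : Δ ≤ min (-g) (u - x)) :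
    clippedStep l u x g Δ = Δ := by
  have hΔg := hΔ.trans (min_le_left _ _)
  have hΔu := hΔ.trans (min_le_right _ _)
  rw [clippedStep, min_eq_left (show x + Δ ≤ u by linarith),
    min_eq_right (show x + Δ ≤ x - g by linarith),
    max_eq_right (show x - Δ ≤ x + Δ by linarith), max_eq_right (show l ≤ x + Δ by linarith)]
  ring

end ClippedStep

/-- characterization of the truncated projected-gradient step:
each component of `sL` is the component of `d` clipped to magnitude `Δ i`. -/
theorem stmt_19 (n : ℕ) (l u x g Δ d sL : Fin n → ℝ)
    (hx : ∀ i, x i ∈ Set.Icc (l i) (u i))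
    (hd : ∀ i, d i = max (l i) (min (x i - g i) (u i)) - x i)
    (hΔ : ∀ i, 0 ≤ Δ i) (hΔd : ∀ i, Δ i ≤ |d i|)
    (hsL : ∀ i, sL i =
      max (l i) (max (x i - Δ i) (min (x i - g i) (min (x i + Δ i) (u i)))) - x i) :
    ∀ i, 0 ≤ sL i * d i ∧ |sL i| = min (|d i|) (Δ i) ∧ g i * sL i ≤ 0 := by
  intro i
  obtain ⟨hxl, hxu⟩ := hx i
  have hΔi := hΔ i
  have hΔdi := hΔd i
  rw [min_eq_right hΔdi]
  rcases le_total 0 (g i) with hg | hg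
  · have hdi : d i = -min (g i) (x i - l i) := (hd i).trans (projStep_eq_neg_min hxu hg)
    rw [hdi, abs_neg, abs_of_nonneg (le_min hg (sub_nonneg.2 hxl))] at hΔdi
    have hsi : sL i = -Δ i := (hsL i).trans (clippedStep_eq_neg hxu hg hΔi hΔdi)
    rw [hsi, hdi, abs_neg, abs_of_nonneg hΔi]
    exact ⟨by nlinarith, rfl, by nlinarith⟩
  · have hdi : d i = min (-g i) (u i - x i) := (hd i).trans (projStep_eq_min hxl hxu hg)
    rw [hdi, abs_of_nonneg (le_min (neg_nonneg.2 hg) (sub_nonneg.2 hxu))] at hΔdi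
    have hsi : sL i = Δ i := (hsL i).trans (clippedStep_eq hxl hΔi hΔdi)
    rw [hsi, hdi, abs_of_nonneg hΔi]
    exact ⟨by nlinarith, rfl, by nlinarith⟩
end
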